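/- arXiv:1704.07159 — 5 statements merged into one kernel-verified Lean document; each statement's English description precedes it below -/
import Mathlib

section
/- Let Λ be a finite cubic simple graph. Then Dart(Λ) is bipartite if and only if Λ is bipartite. -/
open SimpleGraph

/-- The dart graph of a graph `Λ`: vertices are the arcs (darts) of `Λ`,
with `(u,v)` adjacent to `(u',v')` iff (`u' = v` and `u ≠ v'`) or (`u = v'` and `u' ≠ v`). -/
def dartGraph {V : Type*} (Λ : SimpleGraph V) : SimpleGraph Λ.Dart where
  Adj d e := (e.fst = d.snd ∧ d.fst ≠ e.snd) ∨ (d.fst = e.snd ∧ e.fst ≠ d.snd)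
  symm := ⟨fun d e h => h.symm⟩
  loopless := ⟨by
    rintro d (⟨h1, -⟩ | ⟨h1, -⟩) <;> exact Λ.irrefl (h1 ▸ d.adj)⟩

instance {V : Type*} [DecidableEq V] (Λ : SimpleGraph V) :
    DecidableRel (dartGraph Λ).Adj := fun d e =>
  inferInstanceAs (Decidable ((e.fst = d.snd ∧ d.fst ≠ e.snd) ∨ (d.fst = e.snd ∧ e.fst ≠ d.snd)))

/-!
A 2-colouring of `Λ` pulls back to `Dart(Λ)` along the tail map `d ↦ d.fst`, which is a graph
homomorphism. Conversely, if every vertex has degree at least 3, any two darts `(v, a)`, `(v, b)`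
with a common tail are both adjacent in `Dart(Λ)` to a dart `(w, v)` with `w ∉ {a, b}`, so a
2-colouring of `Dart(Λ)` is constant on the darts leaving each vertex. Colouring each vertex by
the colour of its outgoing darts is proper, since for an edge `uv` the dart `(u, v)` is adjacent
to `(v, w)` for any neighbour `w ≠ u` of `v`.
-/

lemma Fin.eq_of_ne_of_ne {a b x : Fin 2} (ha : a ≠ x) (hb : b ≠ x) : a = b := by
  revert a b x; decide

namespace SimpleGraph

variable {V : Type*} {Λ : SimpleGraph V}

lemma exists_adj_ne_ne_of_three_le_degree [Λ.LocallyFinite] {v : V} (hv : 3 ≤ Λ.degree v)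
    (a b : V) : ∃ w, Λ.Adj v w ∧ w ≠ a ∧ w ≠ b := by
  classical
  have hcard : ({a, b} : Finset V).card < (Λ.neighborFinset v).card := by
    rw [card_neighborFinset_eq_degree]
    exact (Finset.card_le_two).trans_lt hv
  obtain ⟨w, hw, hwab⟩ := Finset.exists_mem_notMem_of_card_lt_card hcard
  simp only [Finset.mem_insert, Finset.mem_singleton, not_or] at hwab
  exact ⟨w, (Λ.mem_neighborFinset v w).mp hw, hwab⟩

end SimpleGraph

namespace dartGraph

variable {V : Type*} {Λ : SimpleGraph V}

lemma adj_of_fst_eq_snd {d e : Λ.Dart} (h : e.fst = d.snd) (hne : d.fst ≠ e.snd) :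
    (dartGraph Λ).Adj d e :=
  Or.inl ⟨h, hne⟩

variable (Λ) in
def fstHom : dartGraph Λ →g Λ where
  toFun d := d.fst
  map_rel' := by
    rintro d e (⟨h, -⟩ | ⟨h, -⟩)
    · exact h ▸ d.adj
    · exact h ▸ e.adj.symm

lemma colorable_of_colorable {n : ℕ} (h : Λ.Colorable n) : (dartGraph Λ).Colorable n :=
  h.of_hom (fstHom Λ)

lemma Coloring.eq_of_fst_eq [Λ.LocallyFinite] (hΛ : ∀ v, 3 ≤ Λ.degree v)
    (c : (dartGraph Λ).Coloring (Fin 2)) {d e : Λ.Dart} (h : d.fst = e.fst) : c d = c e := by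
  by_cases hsnd : d.snd = e.snd
  · rw [Dart.ext _ _ (Prod.ext h hsnd)]
  obtain ⟨w, hw, hwd, hwe⟩ := exists_adj_ne_ne_of_three_le_degree (hΛ d.fst) d.snd e.snd
  let g : Λ.Dart := ⟨(w, d.fst), hw.symm⟩
  have hgd : (dartGraph Λ).Adj g d := adj_of_fst_eq_snd rfl hwd
  have hge : (dartGraph Λ).Adj g e := adj_of_fst_eq_snd h.symm hwe
  exact Fin.eq_of_ne_of_ne (c.valid hgd).symm (c.valid hge).symm

lemma colorable_two_of_three_le_degree [Λ.LocallyFinite] (hΛ : ∀ v, 3 ≤ Λ.degree v)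
    (h : (dartGraph Λ).Colorable 2) : Λ.Colorable 2 := by
  obtain ⟨c⟩ := h
  have exists_out : ∀ v, ∃ d : Λ.Dart, d.fst = v := fun v ↦
    let ⟨w, hw, _⟩ := exists_adj_ne_ne_of_three_le_degree (hΛ v) v v
    ⟨⟨(v, w), hw⟩, rfl⟩
  choose out out_fst using exists_out
  refine ⟨Coloring.mk (fun v ↦ c (out v)) fun {u v} huv ↦ ?_⟩
  obtain ⟨w, hw, hwu, -⟩ := exists_adj_ne_ne_of_three_le_degree (hΛ v) u u
  let duv : Λ.Dart := ⟨(u, v), huv⟩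
  let dvw : Λ.Dart := ⟨(v, w), hw⟩
  rw [Coloring.eq_of_fst_eq hΛ c (d := out u) (e := duv) (out_fst u),
    Coloring.eq_of_fst_eq hΛ c (d := out v) (e := dvw) (out_fst v)]
  exact c.valid (adj_of_fst_eq_snd rfl hwu.symm)

end dartGraph

theorem dartGraph_bipartite_iff_general {V : Type*} [Fintype V]
    (Λ : SimpleGraph V) [DecidableRel Λ.Adj] (hΛ : Λ.IsRegularOfDegree 3) :
    (dartGraph Λ).Colorable 2 ↔ Λ.Colorable 2 :=
  ⟨dartGraph.colorable_two_of_three_le_degree fun v ↦ (hΛ v).ge,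
    dartGraph.colorable_of_colorable⟩

/-- the dart graph of a finite cubic graph is bipartite iff the graph itself is. -/
theorem dartGraph_bipartite_iff {V : Type*} [Fintype V] [DecidableEq V]
    (Λ : SimpleGraph V) [DecidableRel Λ.Adj] (hΛ : Λ.IsRegularOfDegree 3) :
    (dartGraph Λ).Colorable 2 ↔ Λ.Colorable 2 :=
  dartGraph_bipartite_iff_general Λ hΛ
end

section
/- Let Λ be a finite connected cubic simple graph with at least one edge. Then Dart(Λ) is connected. -/
/-!
A dart `(u, v)` leads to every dart `(v, w)`: directly if `w ≠ u`, and if `w = u` by the detour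
`(u, v) → (v, w₁) → (w₂, v) → (v, u)` through two further neighbours `w₁ ≠ w₂` of `v`, which exist
since `v` has degree at least `3`. Following a walk of `Λ` from the head of one dart to the tail
of another therefore connects the two darts in `dartGraph Λ`.
-/

open SimpleGraph

namespace SimpleGraph

variable {V : Type*} {Λ : SimpleGraph V} [Λ.LocallyFinite]

lemma exists_two_adj_ne_of_three_le_degree {u v : V} (hdeg : 3 ≤ Λ.degree v) :
    ∃ w₁ w₂, w₁ ≠ w₂ ∧ w₁ ≠ u ∧ w₂ ≠ u ∧ Λ.Adj v w₁ ∧ Λ.Adj v w₂ := by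
  classical
  have hcard : 1 < ((Λ.neighborFinset v).erase u).card := by
    have := Finset.pred_card_le_card_erase (s := Λ.neighborFinset v) (a := u)
    rw [card_neighborFinset_eq_degree] at this
    omega
  obtain ⟨w₁, w₂, hw₁, hw₂, hne⟩ := Finset.one_lt_card_iff.mp hcard
  simp only [Finset.mem_erase, mem_neighborFinset] at hw₁ hw₂
  exact ⟨w₁, w₂, hne, hw₁.1, hw₂.1, hw₁.2, hw₂.2⟩

lemma dartGraph_reachable_symm (hdeg : ∀ v, 3 ≤ Λ.degree v) (d : Λ.Dart) :
    (dartGraph Λ).Reachable d d.symm := by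
  obtain ⟨⟨u, v⟩, huv⟩ := d
  obtain ⟨w₁, w₂, hw, hw₁, hw₂, hvw₁, hvw₂⟩ :=
    exists_two_adj_ne_of_three_le_degree (u := u) (hdeg v)
  have h₁ : (dartGraph Λ).Adj ⟨(u, v), huv⟩ ⟨(v, w₁), hvw₁⟩ := Or.inl ⟨rfl, Ne.symm hw₁⟩
  have h₂ : (dartGraph Λ).Adj ⟨(v, w₁), hvw₁⟩ ⟨(w₂, v), hvw₂.symm⟩ := Or.inr ⟨rfl, Ne.symm hw⟩
  have h₃ : (dartGraph Λ).Adj ⟨(w₂, v), hvw₂.symm⟩ ⟨(v, u), huv.symm⟩ := Or.inl ⟨rfl, hw₂⟩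
  exact h₁.reachable.trans (h₂.reachable.trans h₃.reachable)

lemma dartGraph_reachable_of_fst_eq_snd (hdeg : ∀ v, 3 ≤ Λ.degree v) {d e : Λ.Dart}
    (h : e.fst = d.snd) : (dartGraph Λ).Reachable d e := by
  by_cases hback : e.snd = d.fst
  · have : e = d.symm := Dart.ext _ _ (Prod.ext h hback)
    exact this ▸ dartGraph_reachable_symm hdeg d
  · exact Adj.reachable (Or.inl ⟨h, Ne.symm hback⟩)

lemma dartGraph_reachable_of_walk (hdeg : ∀ v, 3 ≤ Λ.degree v) {u x : V} (p : Λ.Walk u x) :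
    ∀ d e : Λ.Dart, d.snd = u → e.fst = x → (dartGraph Λ).Reachable d e := by
  induction p with
  | nil => exact fun d e hd he => dartGraph_reachable_of_fst_eq_snd hdeg (he.trans hd.symm)
  | @cons u w x huw _ ih =>
    intro d e hd he
    let d' : Λ.Dart := ⟨(u, w), huw⟩
    exact (dartGraph_reachable_of_fst_eq_snd hdeg (d := d) (e := d') hd.symm).trans
      (ih d' e rfl he)

lemma dartGraph_connected_of_three_le_degree (hconn : Λ.Connected)
    (hdeg : ∀ v, 3 ≤ Λ.degree v) : (dartGraph Λ).Connected := by
  obtain ⟨v⟩ := hconn.nonempty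
  obtain ⟨w, hvw⟩ := (Λ.degree_pos_iff_exists_adj v).mp (lt_of_lt_of_le three_pos (hdeg v))
  have : Nonempty Λ.Dart := ⟨⟨(v, w), hvw⟩⟩
  exact ⟨fun d e =>
    (hconn d.snd e.fst).elim fun p => dartGraph_reachable_of_walk hdeg p d e rfl rfl⟩

end SimpleGraph

theorem dartGraph_connected_general {V : Type*} [Fintype V]
    (Λ : SimpleGraph V) [DecidableRel Λ.Adj] (hΛ : Λ.IsRegularOfDegree 3)
    (hconn : Λ.Connected) :
    (dartGraph Λ).Connected :=
  dartGraph_connected_of_three_le_degree hconn fun v => (hΛ v).ge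

/-- the dart graph of a finite connected cubic graph with an edge is connected. -/
theorem dartGraph_connected {V : Type*} [Fintype V] [DecidableEq V]
    (Λ : SimpleGraph V) [DecidableRel Λ.Adj] (hΛ : Λ.IsRegularOfDegree 3)
    (hconn : Λ.Connected) (hne : Λ.edgeSet.Nonempty) :
    (dartGraph Λ).Connected :=
  dartGraph_connected_general Λ hΛ hconn
end

section
/- Let Γ be a finite simple graph of odd valence k (k-regular with k odd) and let G ≤ Aut(Γ) act transitively on the vertices and on the edges of Γ. Then G acts transitively on the arcs of Γ. -/
/-!
Fix an arc `d` and suppose no element of `H` reverses it. Since `H` is transitive on edges, its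
orbit then contains exactly one of the two arcs of every edge, i.e. it is an orientation of `Γ`.
Vertex transitivity makes the out-degree `s` of this orientation the same at every vertex, so
counting arcs gives `|V| k = 2 |orbit| = 2 |V| s`, and `k` is even. Hence for odd `k` some element
reverses `d`, and edge transitivity then reaches every arc.
-/

open SimpleGraph Finset

def arcRel {V H : Type*} [Group H] (Γ : SimpleGraph V) (act : H →* Equiv.Perm V)
    (d e : Γ.Dart) : Prop :=
  ∃ g : H, act g d.fst = e.fst ∧ act g d.snd = e.snd

namespace SimpleGraph

variable {V : Type*} {Γ : SimpleGraph V}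

theorem IsRegularOfDegree.even_of_outRegular_orientation [Fintype V] [DecidableEq V] [DecidableRel Γ.Adj]
    [Nonempty V] {k s : ℕ} (hreg : Γ.IsRegularOfDegree k) (P : Γ.Dart → Prop)
    [DecidablePred P] (hP : ∀ y, P y.symm ↔ ¬ P y)
    (hs : ∀ u, #{y | P y ∧ y.fst = u} = s) : Even k := by
  have hdarts : Fintype.card Γ.Dart = Fintype.card V * k := by
    simp [dart_card_eq_sum_degrees, hreg.degree_eq]
  have hreverse : #{y : Γ.Dart | ¬ P y} = #{y | P y} :=
    card_equiv (Dart.symm_involutive.toPerm _) fun y => by simp [hP]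
  have horient : Fintype.card Γ.Dart = 2 * #{y | P y} := by
    rw [← card_univ, ← card_filter_add_card_filter_not (s := univ) (p := P), hreverse, two_mul]
  have hout : #{y : Γ.Dart | P y} = Fintype.card V * s := by
    rw [card_eq_sum_card_fiberwise (f := fun y : Γ.Dart => y.fst) fun y _ => mem_univ y.fst]
    simp [filter_filter, hs]
  refine ⟨s, Nat.eq_of_mul_eq_mul_left (Fintype.card_pos (α := V)) ?_⟩
  rw [← hdarts, horient, hout]
  ring

def Iso.mapDart {W : Type*} {Γ' : SimpleGraph W} (σ : Γ ≃g Γ') : Γ.Dart ≃ Γ'.Dart where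
  toFun d := ⟨(σ d.fst, σ d.snd), σ.map_adj_iff.2 d.adj⟩
  invFun d := ⟨(σ.symm d.fst, σ.symm d.snd), σ.symm.map_adj_iff.2 d.adj⟩
  left_inv d := by ext <;> simp
  right_inv d := by ext <;> simp

end SimpleGraph

section arcRel

variable {V H : Type*} [Group H] {Γ : SimpleGraph V} {act : H →* Equiv.Perm V}
  {c d e : Γ.Dart}

theorem arcRel.symm (h : arcRel Γ act d e) : arcRel Γ act e d := by
  obtain ⟨g, h₁, h₂⟩ := h
  exact ⟨g⁻¹, by simp [← h₁], by simp [← h₂]⟩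

theorem arcRel.trans (h : arcRel Γ act c d) (h' : arcRel Γ act d e) : arcRel Γ act c e := by
  obtain ⟨g, h₁, h₂⟩ := h
  obtain ⟨g', h₁', h₂'⟩ := h'
  exact ⟨g' * g, by simp [h₁, h₁'], by simp [h₂, h₂']⟩

theorem arcRel.dart_symm (h : arcRel Γ act d e) : arcRel Γ act d.symm e.symm := by
  obtain ⟨g, h₁, h₂⟩ := h
  exact ⟨g, h₂, h₁⟩

theorem arcRel_or_arcRel_symm_of_edge_transitive
    (hedge : ∀ e ∈ Γ.edgeSet, ∀ f ∈ Γ.edgeSet, ∃ g : H, Sym2.map (act g) e = f)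
    (d e : Γ.Dart) : arcRel Γ act d e ∨ arcRel Γ act d e.symm := by
  obtain ⟨g, hg⟩ := hedge d.edge d.edge_mem e.edge e.edge_mem
  rw [Dart.edge, Sym2.map_mk, eq_comm, dart_edge_eq_mk'_iff'] at hg
  rcases hg with ⟨h₁, h₂⟩ | ⟨h₁, h₂⟩
  · exact .inl ⟨g, h₁.symm, h₂.symm⟩
  · exact .inr ⟨g, h₂.symm, h₁.symm⟩

theorem arcRel_of_arcRel_symm_self
    (hedge : ∀ e ∈ Γ.edgeSet, ∀ f ∈ Γ.edgeSet, ∃ g : H, Sym2.map (act g) e = f)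
    (hrev : arcRel Γ act d d.symm) (e : Γ.Dart) : arcRel Γ act d e := by
  rcases arcRel_or_arcRel_symm_of_edge_transitive hedge d e with h | h
  · exact h
  · simpa using hrev.trans h.dart_symm

theorem arcRel_symm_iff_not_of_not_arcRel_symm_self
    (hedge : ∀ e ∈ Γ.edgeSet, ∀ f ∈ Γ.edgeSet, ∃ g : H, Sym2.map (act g) e = f)
    (hrev : ¬ arcRel Γ act d d.symm) (e : Γ.Dart) :
    arcRel Γ act d e.symm ↔ ¬ arcRel Γ act d e := by
  refine ⟨fun h h' => hrev ?_, fun h => ?_⟩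
  · exact h'.trans ((h'.symm.trans h).trans h'.dart_symm.symm)
  · exact (arcRel_or_arcRel_symm_of_edge_transitive hedge d e).resolve_left h

theorem card_filter_arcRel_fst_eq [Fintype V] [DecidableEq V] [DecidableRel Γ.Adj]
    [DecidablePred (arcRel Γ act d)]
    (hact : ∀ (g : H) (u v : V), Γ.Adj (act g u) (act g v) ↔ Γ.Adj u v)
    (hvert : ∀ u v : V, ∃ g : H, act g u = v) (u v : V) :
    #{y | arcRel Γ act d y ∧ y.fst = u} = #{y | arcRel Γ act d y ∧ y.fst = v} := by
  obtain ⟨g, rfl⟩ := hvert u v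
  let σ : Γ ≃g Γ := ⟨act g, hact g _ _⟩
  refine card_equiv σ.mapDart fun y => ?_
  have hy : arcRel Γ act y (σ.mapDart y) := ⟨g, rfl, rfl⟩
  simp only [mem_filter, mem_univ, true_and]
  exact and_congr ⟨fun h => h.trans hy, fun h => h.trans hy.symm⟩ (act g).injective.eq_iff.symm

end arcRel

theorem odd_valence_vertex_edge_transitive_implies_arc_transitive_general
    {V H : Type*} [Fintype V] [Group H]
    (Γ : SimpleGraph V) [DecidableRel Γ.Adj] {k : ℕ}
    (hreg : Γ.IsRegularOfDegree k) (hodd : Odd k)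
    (act : H →* Equiv.Perm V)
    (hact : ∀ (g : H) (u v : V), Γ.Adj (act g u) (act g v) ↔ Γ.Adj u v)
    (hvert : ∀ u v : V, ∃ g : H, act g u = v)
    (hedge : ∀ e ∈ Γ.edgeSet, ∀ f ∈ Γ.edgeSet, ∃ g : H, Sym2.map (act g) e = f) :
    ∀ d e : Γ.Dart, arcRel Γ act d e := by
  classical
  intro d
  by_cases hrev : arcRel Γ act d d.symm
  · exact arcRel_of_arcRel_symm_self hedge hrev
  · have : Nonempty V := ⟨d.fst⟩
    have heven := hreg.even_of_outRegular_orientation (arcRel Γ act d)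
      (arcRel_symm_iff_not_of_not_arcRel_symm_self hedge hrev)
      (card_filter_arcRel_fst_eq hact hvert · d.fst)
    exact absurd heven (Nat.not_even_iff_odd.2 hodd)

/-- Tutte: a group of automorphisms of a finite `k`-regular graph with `k` odd
which is transitive on vertices and on edges is transitive on arcs. -/
theorem odd_valence_vertex_edge_transitive_implies_arc_transitive
    {V H : Type*} [Fintype V] [DecidableEq V] [Group H]
    (Γ : SimpleGraph V) [DecidableRel Γ.Adj] {k : ℕ}
    (hreg : Γ.IsRegularOfDegree k) (hodd : Odd k) (hne : Γ.edgeSet.Nonempty)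
    (act : H →* Equiv.Perm V)
    (hact : ∀ (g : H) (u v : V), Γ.Adj (act g u) (act g v) ↔ Γ.Adj u v)
    (hvert : ∀ u v : V, ∃ g : H, act g u = v)
    (hedge : ∀ e ∈ Γ.edgeSet, ∀ f ∈ Γ.edgeSet, ∃ g : H, Sym2.map (act g) e = f) :
    ∀ d e : Γ.Dart, arcRel Γ act d e :=
  odd_valence_vertex_edge_transitive_implies_arc_transitive_general Γ hreg hodd act hact hvert hedge
end

section
/- Let Γ be a finite simple graph and G ≤ Aut(Γ) a group acting transitively on the vertices and edges but not on the arcs of Γ. Then every vertex of Γ has even degree. -/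
open SimpleGraph

/-!
Fix an arc `(u₀, w₀)` and orient each edge `{v, w}` as `v → w` when `(v, w)` lies in the
orbit of `(u₀, w₀)` under the group. Edge-transitivity says that every edge receives at least
one orientation, and the failure of arc-transitivity that it receives at most one, so the degree
of a vertex is the sum of its out- and in-degree in this orientation. The orientation is
invariant under the group, so by vertex-transitivity both of these are constant; as both sum to
the number of oriented edges, they are equal and the degree is even.
-/

open Finset

section Digraph

variable {V : Type*} [Fintype V] (R : V → V → Prop) [DecidableRel R]

theorem card_out_map_eq {σ : V ≃ V} (hσ : ∀ x y, R (σ x) (σ y) ↔ R x y) (v : V) :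
    #{w | R (σ v) w} = #{w | R v w} :=
  (card_equiv σ fun w => by simp [hσ]).symm

theorem card_in_map_eq {σ : V ≃ V} (hσ : ∀ x y, R (σ x) (σ y) ↔ R x y) (v : V) :
    #{w | R w (σ v)} = #{w | R w v} :=
  (card_equiv σ fun w => by simp [hσ]).symm

theorem card_out_eq_card_in_of_transitive
    (htrans : ∀ u v, ∃ σ : V ≃ V, σ u = v ∧ ∀ x y, R (σ x) (σ y) ↔ R x y) (v : V) :
    #{w | R v w} = #{w | R w v} := by
  have hout : ∀ u ∈ univ, #(univ.bipartiteAbove R u) = #{w | R v w} := fun u _ => by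
    obtain ⟨σ, rfl, hσ⟩ := htrans v u
    exact card_out_map_eq R hσ v
  have hin : ∀ u ∈ univ, #(univ.bipartiteBelow R u) = #{w | R w v} := fun u _ => by
    obtain ⟨σ, rfl, hσ⟩ := htrans v u
    exact card_in_map_eq R hσ v
  have hsum := sum_card_bipartiteAbove_eq_sum_card_bipartiteBelow (s := univ) (t := univ) R
  rw [sum_const_nat hout, sum_const_nat hin] at hsum
  exact Nat.eq_of_mul_eq_mul_left (card_pos.2 ⟨v, mem_univ v⟩) hsum

theorem degree_eq_card_out_add_card_in (Γ : SimpleGraph V) [DecidableRel Γ.Adj]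
    (hadj : ∀ v w, Γ.Adj v w ↔ R v w ∨ R w v) (hasymm : ∀ v w, R v w → ¬ R w v) (v : V) :
    Γ.degree v = #{w | R v w} + #{w | R w v} := by
  classical
  rw [← card_neighborFinset_eq_degree, neighborFinset_eq_filter, ← card_union_of_disjoint
    (disjoint_filter.2 fun w _ => hasymm v w), ← filter_or]
  simp only [hadj]

end Digraph

section SameOrbit

variable {V H : Type*} [Group H] {act : H →* Equiv.Perm V} {p q r : V × V}

variable (act) in
def SameOrbit (p q : V × V) : Prop :=
  ∃ g : H, act g p.1 = q.1 ∧ act g p.2 = q.2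

theorem SameOrbit.symm (h : SameOrbit act p q) : SameOrbit act q p := by
  obtain ⟨g, h1, h2⟩ := h
  exact ⟨g⁻¹, by simp [← h1], by simp [← h2]⟩

theorem SameOrbit.trans (h : SameOrbit act p q) (h' : SameOrbit act q r) :
    SameOrbit act p r := by
  obtain ⟨g, h1, h2⟩ := h
  obtain ⟨g', h1', h2'⟩ := h'
  exact ⟨g' * g, by simp [h1, h1'], by simp [h2, h2']⟩

theorem SameOrbit.swap (h : SameOrbit act p q) : SameOrbit act p.swap q.swap := by
  obtain ⟨g, h1, h2⟩ := h
  exact ⟨g, h2, h1⟩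

theorem sameOrbit_apply_iff (g : H) :
    SameOrbit act p (act g q.1, act g q.2) ↔ SameOrbit act p q :=
  ⟨fun h => h.trans ⟨g⁻¹, by simp, by simp⟩, fun h => h.trans ⟨g, rfl, rfl⟩⟩

theorem SameOrbit.adj {Γ : SimpleGraph V}
    (hact : ∀ (g : H) (u v : V), Γ.Adj (act g u) (act g v) ↔ Γ.Adj u v)
    (h : SameOrbit act p q) (hp : Γ.Adj p.1 p.2) : Γ.Adj q.1 q.2 := by
  obtain ⟨g, h1, h2⟩ := h
  rw [← h1, ← h2, hact]
  exact hp

end SameOrbit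

section HalfArcTransitive

variable {V H : Type*} [Group H] {Γ : SimpleGraph V} {act : H →* Equiv.Perm V}
  {p q : V × V}

theorem sameOrbit_or_sameOrbit_swap
    (hedge : ∀ e ∈ Γ.edgeSet, ∀ f ∈ Γ.edgeSet, ∃ g : H, Sym2.map (act g) e = f)
    (hp : Γ.Adj p.1 p.2) (hq : Γ.Adj q.1 q.2) :
    SameOrbit act p q ∨ SameOrbit act p q.swap := by
  obtain ⟨g, hg⟩ := hedge s(p.1, p.2) hp s(q.1, q.2) hq
  rw [Sym2.map_mk, Sym2.eq_iff] at hg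
  exact hg.imp (fun ⟨h1, h2⟩ => ⟨g, h1, h2⟩) fun ⟨h1, h2⟩ => ⟨g, h1, h2⟩

theorem not_sameOrbit_swap
    (hedge : ∀ e ∈ Γ.edgeSet, ∀ f ∈ Γ.edgeSet, ∃ g : H, Sym2.map (act g) e = f)
    (hnarc : ¬ ∀ d e : Γ.Dart, arcRel Γ act d e) (hp : Γ.Adj p.1 p.2) :
    ¬ SameOrbit act p p.swap := by
  intro hswap
  have hall : ∀ d : Γ.Dart, SameOrbit act p d.toProd := fun d =>
    (sameOrbit_or_sameOrbit_swap hedge hp d.adj).elim id fun h => hswap.trans h.swap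
  exact hnarc fun d e => (hall d).symm.trans (hall e)

theorem adj_iff_sameOrbit_or_sameOrbit_swap
    (hact : ∀ (g : H) (u v : V), Γ.Adj (act g u) (act g v) ↔ Γ.Adj u v)
    (hedge : ∀ e ∈ Γ.edgeSet, ∀ f ∈ Γ.edgeSet, ∃ g : H, Sym2.map (act g) e = f)
    (hp : Γ.Adj p.1 p.2) (v w : V) :
    Γ.Adj v w ↔ SameOrbit act p (v, w) ∨ SameOrbit act p (w, v) := by
  refine ⟨fun h => sameOrbit_or_sameOrbit_swap hedge hp h, ?_⟩
  rintro (h | h)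
  · exact h.adj hact hp
  · exact (h.adj hact hp).symm

theorem not_sameOrbit_and_sameOrbit_swap
    (hedge : ∀ e ∈ Γ.edgeSet, ∀ f ∈ Γ.edgeSet, ∃ g : H, Sym2.map (act g) e = f)
    (hnarc : ¬ ∀ d e : Γ.Dart, arcRel Γ act d e) (hp : Γ.Adj p.1 p.2) (v w : V)
    (h : SameOrbit act p (v, w)) : ¬ SameOrbit act p (w, v) := fun h' =>
  not_sameOrbit_swap hedge hnarc hp (h.trans h'.swap.symm)

end HalfArcTransitive

theorem half_arc_transitive_implies_even_degree_general
    {V H : Type*} [Fintype V] [Group H]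
    (Γ : SimpleGraph V) [DecidableRel Γ.Adj] (hne : Γ.edgeSet.Nonempty)
    (act : H →* Equiv.Perm V)
    (hact : ∀ (g : H) (u v : V), Γ.Adj (act g u) (act g v) ↔ Γ.Adj u v)
    (hvert : ∀ u v : V, ∃ g : H, act g u = v)
    (hedge : ∀ e ∈ Γ.edgeSet, ∀ f ∈ Γ.edgeSet, ∃ g : H, Sym2.map (act g) e = f)
    (hnarc : ¬ ∀ d e : Γ.Dart, arcRel Γ act d e) :
    ∀ v : V, Even (Γ.degree v) := by
  classical
  obtain ⟨u₀, w₀, h₀⟩ := Γ.ne_bot_iff_exists_adj.mp (Γ.edgeSet_nonempty.mp hne)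
  let R : V → V → Prop := fun v w => SameOrbit act (u₀, w₀) (v, w)
  have htrans : ∀ u v, ∃ σ : V ≃ V, σ u = v ∧ ∀ x y, R (σ x) (σ y) ↔ R x y := fun u v => by
    obtain ⟨g, hg⟩ := hvert u v
    exact ⟨act g, hg, fun x y => sameOrbit_apply_iff (q := (x, y)) g⟩
  intro v
  rw [degree_eq_card_out_add_card_in R Γ
      (adj_iff_sameOrbit_or_sameOrbit_swap hact hedge (p := (u₀, w₀)) h₀)
      (not_sameOrbit_and_sameOrbit_swap hedge hnarc (p := (u₀, w₀)) h₀),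
    card_out_eq_card_in_of_transitive R htrans]
  exact ⟨_, rfl⟩

/-- if a group of automorphisms of a finite simple graph is transitive on
vertices and on edges but not on arcs, then every vertex has even degree. -/
theorem half_arc_transitive_implies_even_degree
    {V H : Type*} [Fintype V] [DecidableEq V] [Group H]
    (Γ : SimpleGraph V) [DecidableRel Γ.Adj] (hne : Γ.edgeSet.Nonempty)
    (act : H →* Equiv.Perm V)
    (hact : ∀ (g : H) (u v : V), Γ.Adj (act g u) (act g v) ↔ Γ.Adj u v)
    (hvert : ∀ u v : V, ∃ g : H, act g u = v)
    (hedge : ∀ e ∈ Γ.edgeSet, ∀ f ∈ Γ.edgeSet, ∃ g : H, Sym2.map (act g) e = f)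
    (hnarc : ¬ ∀ d e : Γ.Dart, arcRel Γ act d e) :
    ∀ v : V, Even (Γ.degree v) :=
  half_arc_transitive_implies_even_degree_general Γ hne act hact hvert hedge hnarc
end

section
/- Let Λ be a finite connected cubic simple graph and G ≤ Aut(Λ) a group acting transitively on the 2-arcs of Λ. Then the induced action of G on Dart(Λ) is vertex-transitive and edge-transitive but not arc-transitive (i.e., G is half-arc-transitive on Dart(Λ)). -/
open SimpleGraph

/-- A 2-arc of `Λ`: an ordered triple `(u,v,w)` with `u ~ v`, `v ~ w` and `u ≠ w`. -/
def TwoArc {V : Type*} (Λ : SimpleGraph V) : Type _ :=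
  {t : V × V × V // Λ.Adj t.1 t.2.1 ∧ Λ.Adj t.2.1 t.2.2 ∧ t.1 ≠ t.2.2}

/-!
A 2-arc `(u, v, w)` is the same thing as an edge `{(u, v), (v, w)}` of `Dart(Λ)` together with
the orientation in which `(u, v)` precedes `(v, w)`. Hence a 2-arc-transitive group moves any
oriented edge of `Dart(Λ)` to any other, which gives edge-transitivity, and vertex-transitivity
once every dart extends to a 2-arc (valency at least 2). It never reverses an edge, though: a map
with `(u, v) ↦ (v, w)` and `(v, w) ↦ (u, v)` would send `v` both to `w` and to `u ≠ w`.
-/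

namespace SimpleGraph

variable {V H : Type*} {Λ : SimpleGraph V}

def Dart.Precedes (d₁ d₂ : Λ.Dart) : Prop :=
  d₂.fst = d₁.snd ∧ d₁.fst ≠ d₂.snd

theorem dartGraph_adj_iff {d₁ d₂ : Λ.Dart} :
    (dartGraph Λ).Adj d₁ d₂ ↔ d₁.Precedes d₂ ∨ d₂.Precedes d₁ :=
  Iff.rfl

def TwoArc.ofPrecedes {d₁ d₂ : Λ.Dart} (h : d₁.Precedes d₂) : TwoArc Λ :=
  ⟨(d₁.fst, d₁.snd, d₂.snd), d₁.adj, h.1 ▸ d₂.adj, h.2⟩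

def IsTwoArcTransitive (act : H → V → V) (Λ : SimpleGraph V) : Prop :=
  ∀ t t' : TwoArc Λ, ∃ g : H,
    act g t.1.1 = t'.1.1 ∧ act g t.1.2.1 = t'.1.2.1 ∧ act g t.1.2.2 = t'.1.2.2

theorem neighborSet_nontrivial_of_one_lt_degree {v : V} [Fintype (Λ.neighborSet v)]
    (h : 1 < Λ.degree v) : (Λ.neighborSet v).Nontrivial := by
  rw [← card_neighborFinset_eq_degree, Finset.one_lt_card_iff_nontrivial] at h
  simpa only [coe_neighborFinset] using h.coe

theorem Dart.exists_precedes (hΛ : ∀ v, (Λ.neighborSet v).Nontrivial) (d : Λ.Dart) :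
    ∃ d' : Λ.Dart, d.Precedes d' := by
  obtain ⟨w, hw, hne⟩ := (hΛ d.snd).exists_ne d.fst
  exact ⟨⟨(d.snd, w), hw⟩, rfl, hne.symm⟩

theorem exists_dart_precedes [Nonempty V] (hΛ : ∀ v, (Λ.neighborSet v).Nontrivial) :
    ∃ d₁ d₂ : Λ.Dart, d₁.Precedes d₂ := by
  obtain ⟨v⟩ := ‹Nonempty V›
  obtain ⟨u, hu, w, hw, huw⟩ := hΛ v
  exact ⟨⟨(u, v), Λ.adj_symm hu⟩, ⟨(v, w), hw⟩, rfl, huw⟩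

theorem Dart.Precedes.not_map_reverse {d₁ d₂ : Λ.Dart} (h : d₁.Precedes d₂) (f : V → V) :
    ¬ (f d₁.fst = d₂.fst ∧ f d₁.snd = d₂.snd ∧ f d₂.fst = d₁.fst ∧ f d₂.snd = d₁.snd) := by
  rintro ⟨-, h₁, h₂, -⟩
  rw [h.1] at h₂
  exact h.2 (h₂.symm.trans h₁)

namespace IsTwoArcTransitive

variable {act : H → V → V}

theorem exists_map_precedes (h : IsTwoArcTransitive act Λ) {d₁ d₂ e₁ e₂ : Λ.Dart}
    (hd : d₁.Precedes d₂) (he : e₁.Precedes e₂) :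
    ∃ g : H, act g d₁.fst = e₁.fst ∧ act g d₁.snd = e₁.snd ∧
      act g d₂.fst = e₂.fst ∧ act g d₂.snd = e₂.snd := by
  obtain ⟨g, h₁, h₂, h₃⟩ := h (TwoArc.ofPrecedes hd) (TwoArc.ofPrecedes he)
  exact ⟨g, h₁, h₂, by rw [hd.1, he.1]; exact h₂, h₃⟩

theorem exists_map_dart (h : IsTwoArcTransitive act Λ)
    (hΛ : ∀ v, (Λ.neighborSet v).Nontrivial) (d e : Λ.Dart) :
    ∃ g : H, act g d.fst = e.fst ∧ act g d.snd = e.snd := by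
  obtain ⟨d', hd⟩ := d.exists_precedes hΛ
  obtain ⟨e', he⟩ := e.exists_precedes hΛ
  obtain ⟨g, h₁, h₂, -⟩ := h.exists_map_precedes hd he
  exact ⟨g, h₁, h₂⟩

theorem exists_map_dartGraph_edge_of_precedes (h : IsTwoArcTransitive act Λ)
    {d₁ d₂ e₁ e₂ : Λ.Dart} (hd : d₁.Precedes d₂) (he : (dartGraph Λ).Adj e₁ e₂) :
    ∃ g : H,
      (act g d₁.fst = e₁.fst ∧ act g d₁.snd = e₁.snd ∧
        act g d₂.fst = e₂.fst ∧ act g d₂.snd = e₂.snd) ∨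
      (act g d₁.fst = e₂.fst ∧ act g d₁.snd = e₂.snd ∧
        act g d₂.fst = e₁.fst ∧ act g d₂.snd = e₁.snd) := by
  rcases dartGraph_adj_iff.1 he with he | he
  · exact (h.exists_map_precedes hd he).imp fun _ => Or.inl
  · exact (h.exists_map_precedes hd he).imp fun _ => Or.inr

theorem exists_map_dartGraph_edge (h : IsTwoArcTransitive act Λ)
    {d₁ d₂ e₁ e₂ : Λ.Dart} (hd : (dartGraph Λ).Adj d₁ d₂) (he : (dartGraph Λ).Adj e₁ e₂) :
    ∃ g : H,
      (act g d₁.fst = e₁.fst ∧ act g d₁.snd = e₁.snd ∧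
        act g d₂.fst = e₂.fst ∧ act g d₂.snd = e₂.snd) ∨
      (act g d₁.fst = e₂.fst ∧ act g d₁.snd = e₂.snd ∧
        act g d₂.fst = e₁.fst ∧ act g d₂.snd = e₁.snd) := by
  rcases dartGraph_adj_iff.1 hd with hd | hd
  · exact h.exists_map_dartGraph_edge_of_precedes hd he
  · obtain ⟨g, hg⟩ := h.exists_map_dartGraph_edge_of_precedes hd he
    refine ⟨g, hg.symm.imp ?_ ?_⟩ <;>
      exact fun ⟨h₁, h₂, h₃, h₄⟩ => ⟨h₃, h₄, h₁, h₂⟩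

end IsTwoArcTransitive

end SimpleGraph

theorem two_arc_transitive_gives_half_arc_transitive_dartGraph_general
    {V H : Type*} [Fintype V] [Group H]
    (Λ : SimpleGraph V) [DecidableRel Λ.Adj]
    (hΛ : Λ.IsRegularOfDegree 3) (hconn : Λ.Connected)
    (act : H →* Equiv.Perm V)
    (h2arc : ∀ t t' : TwoArc Λ, ∃ g : H,
      act g t.1.1 = t'.1.1 ∧ act g t.1.2.1 = t'.1.2.1 ∧ act g t.1.2.2 = t'.1.2.2) :
    (∀ d e : Λ.Dart, ∃ g : H, act g d.fst = e.fst ∧ act g d.snd = e.snd) ∧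
    (∀ d₁ d₂ e₁ e₂ : Λ.Dart, (dartGraph Λ).Adj d₁ d₂ → (dartGraph Λ).Adj e₁ e₂ →
      ∃ g : H,
        (act g d₁.fst = e₁.fst ∧ act g d₁.snd = e₁.snd ∧
         act g d₂.fst = e₂.fst ∧ act g d₂.snd = e₂.snd) ∨
        (act g d₁.fst = e₂.fst ∧ act g d₁.snd = e₂.snd ∧
         act g d₂.fst = e₁.fst ∧ act g d₂.snd = e₁.snd)) ∧
    ¬ (∀ d₁ d₂ e₁ e₂ : Λ.Dart, (dartGraph Λ).Adj d₁ d₂ → (dartGraph Λ).Adj e₁ e₂ →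
      ∃ g : H,
        act g d₁.fst = e₁.fst ∧ act g d₁.snd = e₁.snd ∧
        act g d₂.fst = e₂.fst ∧ act g d₂.snd = e₂.snd) := by
  have h : IsTwoArcTransitive (fun g => act g) Λ := h2arc
  have hnt : ∀ v, (Λ.neighborSet v).Nontrivial := fun v =>
    neighborSet_nontrivial_of_one_lt_degree (by rw [hΛ v]; norm_num)
  have : Nonempty V := hconn.nonempty
  obtain ⟨d₁, d₂, hd⟩ := exists_dart_precedes hnt
  refine ⟨h.exists_map_dart hnt, fun _ _ _ _ => h.exists_map_dartGraph_edge, fun hat => ?_⟩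
  obtain ⟨g, hg⟩ := hat d₁ d₂ d₂ d₁ (Or.inl hd) (Or.inr hd)
  exact hd.not_map_reverse (act g) hg

/-- if a group acts 2-arc-transitively on a finite connected cubic graph `Λ`,
then its induced action on `Dart(Λ)` is vertex- and edge-transitive but not arc-transitive. -/
theorem two_arc_transitive_gives_half_arc_transitive_dartGraph
    {V H : Type*} [Fintype V] [DecidableEq V] [Group H]
    (Λ : SimpleGraph V) [DecidableRel Λ.Adj]
    (hΛ : Λ.IsRegularOfDegree 3) (hconn : Λ.Connected)
    (act : H →* Equiv.Perm V)
    (hact : ∀ (g : H) (u v : V), Λ.Adj (act g u) (act g v) ↔ Λ.Adj u v)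
    (h2arc : ∀ t t' : TwoArc Λ, ∃ g : H,
      act g t.1.1 = t'.1.1 ∧ act g t.1.2.1 = t'.1.2.1 ∧ act g t.1.2.2 = t'.1.2.2) :
    (∀ d e : Λ.Dart, ∃ g : H, act g d.fst = e.fst ∧ act g d.snd = e.snd) ∧
    (∀ d₁ d₂ e₁ e₂ : Λ.Dart, (dartGraph Λ).Adj d₁ d₂ → (dartGraph Λ).Adj e₁ e₂ →
      ∃ g : H,
        (act g d₁.fst = e₁.fst ∧ act g d₁.snd = e₁.snd ∧
         act g d₂.fst = e₂.fst ∧ act g d₂.snd = e₂.snd) ∨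
        (act g d₁.fst = e₂.fst ∧ act g d₁.snd = e₂.snd ∧
         act g d₂.fst = e₁.fst ∧ act g d₂.snd = e₁.snd)) ∧
    ¬ (∀ d₁ d₂ e₁ e₂ : Λ.Dart, (dartGraph Λ).Adj d₁ d₂ → (dartGraph Λ).Adj e₁ e₂ →
      ∃ g : H,
        act g d₁.fst = e₁.fst ∧ act g d₁.snd = e₁.snd ∧
        act g d₂.fst = e₂.fst ∧ act g d₂.snd = e₂.snd) :=
  two_arc_transitive_gives_half_arc_transitive_dartGraph_general Λ hΛ hconn act h2arc
end
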